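/- arXiv:2201.03615 — 6 statements merged into one kernel-verified Lean document; each statement's English description precedes it below -/
import Mathlib

section
/- Let E ⊆ ℂ^a ⊗ ℂ^b be a linear space of matrices, r < min(a,b), and suppose E is not of bounded rank r (i.e., some matrix in E has rank > r). If there exists a polynomial P of degree r+1 (in the coordinates of E) dividing all (r+1)×(r+1) minors of the generic matrix of E, then either P factors into a product of linear forms, or after changes of bases in ℂ^a and ℂ^b every matrix in E is supported in a common (r+1)×(r+1) block. -/
/-!
Every `(r+1)`-minor of `E` is homogeneous of degree `r+1` and divisible by `P`, hence a scalar
multiple of `P`; one of them is nonzero because `E` is not of bounded rank `r`.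

If some `(r+2)`-minor `B` is nonzero, the entries of `adj B` are `(r+1)`-minors, so
`adj B = P • G` with `G` scalar. Then `B * adj B = det B • 1` forces `B * G = L • 1` for a linear
form `L`, and taking determinants gives `P * det G = L ^ (r+1)`.

If all `(r+2)`-minors vanish, let `(f₀, g₀)` index a nonzero `(r+1)`-minor. Expanding the
`(r+2)`-minor with rows `i, f₀` and columns `j, g₀` along its first column writes row `i` of `E`
as a combination of the rows `f₀`, with scalar coefficients that do not depend on `j`. Hence the
columns of all matrices in `E` lie in one `(r+1)`-dimensional space, and symmetrically the rows.
-/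

open MvPolynomial Matrix

section LinearAlgebra

variable {K V : Type*} [Field K] [AddCommGroup V] [Module K V]

theorem exists_linearIndependent_comp_of_le_finrank_span {ι : Type*} (v : ι → V) {N : ℕ}
    (h : N ≤ Module.finrank K (Submodule.span K (Set.range v))) :
    ∃ g : Fin N → ι, LinearIndependent K (v ∘ g) := by
  rcases N.eq_zero_or_pos with rfl | hN
  · exact ⟨Fin.elim0, linearIndependent_empty_type⟩
  have := Module.finite_of_finrank_pos (hN.trans_le h)
  obtain ⟨w, hw, -, hli⟩ := Submodule.exists_fun_fin_finrank_span_eq K (Set.range v)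
  choose g hg using hw
  have hvg : v ∘ g = w := funext hg
  refine ⟨g ∘ Fin.castLE h, ?_⟩
  rw [← Function.comp_assoc, hvg]
  exact hli.comp _ (Fin.castLE_injective h)

theorem Submodule.exists_le_finrank_eq [FiniteDimensional K V] (W : Submodule K V) {N : ℕ}
    (hW : Module.finrank K W ≤ N) (hN : N ≤ Module.finrank K V) :
    ∃ W' : Submodule K V, W ≤ W' ∧ Module.finrank K W' = N := by
  obtain ⟨C, hC⟩ := W.exists_isCompl
  have hWC := Submodule.finrank_add_eq_of_isCompl hC
  obtain ⟨v, hv⟩ := exists_linearIndependent_of_le_finrank (R := K) (M := C)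
    (n := N - Module.finrank K W) (by omega)
  set D := Submodule.span K (Set.range (C.subtype ∘ v))
  have hD : Module.finrank K D = N - Module.finrank K W := by
    rw [finrank_span_eq_card (hv.map' C.subtype C.ker_subtype), Fintype.card_fin]
  have hDC : D ≤ C := Submodule.span_le.2 (Set.range_subset_iff.2 fun t => (v t).2)
  have hWD : W ⊓ D = ⊥ := disjoint_iff.1 (hC.disjoint.mono_right hDC)
  refine ⟨W ⊔ D, le_sup_left, ?_⟩
  have := Submodule.finrank_sup_add_finrank_inf_eq W D
  rw [hWD, finrank_bot] at this
  omega

end LinearAlgebra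

namespace Matrix

variable {m n k R : Type*} [Fintype k] [DecidableEq k] [CommRing R]

theorem injective_left_of_det_submatrix_ne_zero {A : Matrix m n R} {f : k → m} {g : k → n}
    (h : (A.submatrix f g).det ≠ 0) : Function.Injective f := by
  intro s t hst
  by_contra hne
  exact h (det_zero_of_row_eq hne (funext fun _ => by simp [hst]))

theorem det_transpose_submatrix (A : Matrix m n R) (f : k → n) (g : k → m) :
    (Aᵀ.submatrix f g).det = (A.submatrix g f).det := by
  rw [← transpose_submatrix, det_transpose]

theorem injective_right_of_det_submatrix_ne_zero {A : Matrix m n R} {f : k → m} {g : k → n}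
    (h : (A.submatrix f g).det ≠ 0) : Function.Injective g :=
  injective_left_of_det_submatrix_ne_zero (A := Aᵀ) (by rwa [det_transpose_submatrix])

theorem exists_det_submatrix_ne_zero_of_le_rank {K : Type*} [Field K] [Fintype m] [Fintype n]
    (M : Matrix m n K) {N : ℕ} (h : N ≤ M.rank) :
    ∃ (f : Fin N → m) (g : Fin N → n), (M.submatrix f g).det ≠ 0 := by
  rw [rank_eq_finrank_span_row] at h
  obtain ⟨f, hf⟩ := exists_linearIndependent_comp_of_le_finrank_span M.row h
  have hrank : N ≤ (M.submatrix f id).rank :=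
    (LinearIndependent.rank_matrix (M := M.submatrix f id) hf).ge.trans_eq' (by simp)
  rw [rank_eq_finrank_span_cols] at hrank
  obtain ⟨g, hg⟩ := exists_linearIndependent_comp_of_le_finrank_span _ hrank
  refine ⟨f, g, ?_⟩
  rw [← isUnit_iff_ne_zero, ← isUnit_iff_isUnit_det, ← linearIndependent_cols_iff_isUnit]
  exact hg

theorem exists_det_submatrix_ne_zero_of_le_rank_map {K : Type*} [Field K] [Fintype m]
    [Fintype n] (E : Matrix m n R) (φ : R →+* K) {N : ℕ} (h : N ≤ (E.map φ).rank) :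
    ∃ (f : Fin N → m) (g : Fin N → n), (E.submatrix f g).det ≠ 0 := by
  obtain ⟨f, g, hfg⟩ := (E.map φ).exists_det_submatrix_ne_zero_of_le_rank h
  refine ⟨f, g, fun h0 => hfg ?_⟩
  rw [submatrix_map, ← RingHom.mapMatrix_apply, ← RingHom.map_det, h0, map_zero]

end Matrix

namespace MvPolynomial

variable {σ R m n : Type*} [CommRing R]

theorem isHomogeneous_det {ι : Type*} [Fintype ι] [DecidableEq ι]
    (M : Matrix ι ι (MvPolynomial σ R)) (h : ∀ i j, (M i j).IsHomogeneous 1) :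
    M.det.IsHomogeneous (Fintype.card ι) := by
  rw [det_apply, ← mem_homogeneousSubmodule]
  refine Submodule.sum_mem _ fun τ _ => Submodule.smul_of_tower_mem _ _ ?_
  simpa using IsHomogeneous.prod Finset.univ (fun i => M (τ i) i) (fun _ => 1) fun i _ => h _ _

variable [IsDomain R]

theorem exists_eq_smul_of_dvd_of_isHomogeneous {P M : MvPolynomial σ R}
    (hP : P ≠ 0) (hM : M.IsHomogeneous P.totalDegree) (h : P ∣ M) : ∃ μ : R, M = μ • P := by
  obtain ⟨Q, rfl⟩ := h
  rcases eq_or_ne Q 0 with rfl | hQ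
  · exact ⟨0, by simp⟩
  have hdeg := hM.totalDegree (mul_ne_zero hP hQ)
  rw [totalDegree_mul_of_isDomain hP hQ] at hdeg
  have hQ : Q = C (Q.coeff 0) := totalDegree_eq_zero_iff_eq_C.1 (by omega)
  exact ⟨Q.coeff 0, by rw [smul_eq_C_mul, ← hQ, mul_comm]⟩

theorem exists_det_submatrix_eq_smul_of_dvd (E : Matrix m n (MvPolynomial σ R))
    (hlin : ∀ i j, (E i j).IsHomogeneous 1) {P : MvPolynomial σ R} (hP : P ≠ 0) {N : ℕ}
    (hdeg : P.totalDegree = N)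
    (hdvd : ∀ (f : Fin N → m) (g : Fin N → n),
      Function.Injective f → Function.Injective g → P ∣ (E.submatrix f g).det)
    (f : Fin N → m) (g : Fin N → n) : ∃ μ : R, (E.submatrix f g).det = μ • P := by
  by_cases h0 : (E.submatrix f g).det = 0
  · exact ⟨0, by rw [h0, zero_smul]⟩
  refine exists_eq_smul_of_dvd_of_isHomogeneous hP ?_ (hdvd f g
    (injective_left_of_det_submatrix_ne_zero h0) (injective_right_of_det_submatrix_ne_zero h0))
  simpa [hdeg] using isHomogeneous_det (E.submatrix f g) fun _ _ => hlin _ _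

end MvPolynomial
section Minors

variable {K R : Type*} [Field K] [CommRing R] [IsDomain R] [Algebra K R] {m n : Type*} {N : ℕ}

theorem exists_rows_eq_sum_smul_of_minors (E : Matrix m n R) {P : R} (hP : P ≠ 0)
    {f₀ : Fin N → m} {g₀ : Fin N → n} (h₀ : (E.submatrix f₀ g₀).det ≠ 0)
    (hminor : ∀ f : Fin N → m, ∃ μ : K, (E.submatrix f g₀).det = μ • P)
    (hbig : ∀ (f : Fin (N + 1) → m) (g : Fin (N + 1) → n), (E.submatrix f g).det = 0) :
    ∃ U : Matrix m (Fin N) K, ∀ i j, E i j = ∑ t, U i t • E (f₀ t) j := by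
  suffices ∀ i, ∃ u : Fin N → K, ∀ j, E i j = ∑ t, u t • E (f₀ t) j by
    choose U hU using this
    exact ⟨U, hU⟩
  intro i
  choose μ hμ using fun s : Fin (N + 1) => hminor (Fin.cons i f₀ ∘ s.succAbove)
  have hμ₀ : μ 0 ≠ 0 := by
    rintro h
    apply h₀
    simpa [h] using hμ 0
  have hrel : ∀ j, ∑ s : Fin (N + 1),
      ((-1) ^ (s : ℕ) * μ s) • E ((Fin.cons i f₀ : Fin (N + 1) → m) s) j = 0 := by
    intro j
    have h := hbig (Fin.cons i f₀) (Fin.cons j g₀)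
    rw [det_succ_column_zero] at h
    refine (mul_eq_zero.1 ?_).resolve_left hP
    rw [← h, Finset.mul_sum]
    refine Finset.sum_congr rfl fun s _ => ?_
    have hs : ((E.submatrix (Fin.cons i f₀) (Fin.cons j g₀)).submatrix s.succAbove Fin.succ).det
        = μ s • P := hμ s
    rw [hs]
    simp only [Algebra.smul_def, map_mul, map_pow, map_neg, map_one, submatrix_apply,
      Fin.cons_zero]
    ring
  refine ⟨fun t => -(μ 0)⁻¹ * ((-1) ^ ((t : ℕ) + 1) * μ t.succ), fun j => ?_⟩
  have h := hrel j
  rw [Fin.sum_univ_succ] at h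
  simp only [Fin.cons_zero, Fin.cons_succ, Fin.val_zero, pow_zero, one_mul, Fin.val_succ] at h
  rw [← inv_smul_smul₀ hμ₀ (E i j), eq_neg_of_add_eq_zero_left h]
  simp only [smul_neg, Finset.smul_sum, ← Finset.sum_neg_distrib, mul_smul, neg_smul]

theorem exists_finrank_eq_forall_col_mem_of_minors [Fintype m] (E : Matrix m n R)
    (hN : N ≤ Fintype.card m) {P : R} (hP : P ≠ 0)
    {f₀ : Fin N → m} {g₀ : Fin N → n} (h₀ : (E.submatrix f₀ g₀).det ≠ 0)
    (hminor : ∀ (f : Fin N → m) (g : Fin N → n), ∃ μ : K, (E.submatrix f g).det = μ • P)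
    (hbig : ∀ (f : Fin (N + 1) → m) (g : Fin (N + 1) → n), (E.submatrix f g).det = 0) :
    ∃ A : Submodule K (m → K), Module.finrank K A = N ∧
      ∀ (φ : R →ₐ[K] K) j, (fun i => φ (E i j)) ∈ A := by
  obtain ⟨U, hU⟩ := exists_rows_eq_sum_smul_of_minors E hP h₀ (hminor · g₀) hbig
  obtain ⟨A, hUA, hA⟩ := (LinearMap.range U.mulVecLin).exists_le_finrank_eq
    (U.mulVecLin.finrank_range_le.trans_eq (Module.finrank_fin_fun K)) (by simpa using hN)
  refine ⟨A, hA, fun φ j => hUA ⟨fun t => φ (E (f₀ t) j), funext fun i => ?_⟩⟩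
  simp [hU i j, mulVec, dotProduct]

theorem exists_common_block_of_minors [Fintype m] [Fintype n] (E : Matrix m n R)
    (hm : N ≤ Fintype.card m) (hn : N ≤ Fintype.card n) {P : R} (hP : P ≠ 0)
    {f₀ : Fin N → m} {g₀ : Fin N → n} (h₀ : (E.submatrix f₀ g₀).det ≠ 0)
    (hminor : ∀ (f : Fin N → m) (g : Fin N → n), ∃ μ : K, (E.submatrix f g).det = μ • P)
    (hbig : ∀ (f : Fin (N + 1) → m) (g : Fin (N + 1) → n), (E.submatrix f g).det = 0) :
    ∃ (A : Submodule K (m → K)) (B : Submodule K (n → K)),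
      Module.finrank K A = N ∧ Module.finrank K B = N ∧
      ∀ φ : R →ₐ[K] K, (∀ j, (fun i => φ (E i j)) ∈ A) ∧ (∀ i, (fun j => φ (E i j)) ∈ B) := by
  obtain ⟨A, hA, hEA⟩ := exists_finrank_eq_forall_col_mem_of_minors E hm hP h₀ hminor hbig
  obtain ⟨B, hB, hEB⟩ := exists_finrank_eq_forall_col_mem_of_minors Eᵀ hn hP
    (f₀ := g₀) (g₀ := f₀) (by rwa [det_transpose_submatrix])
    (fun g f => by simpa only [det_transpose_submatrix] using hminor f g)
    (fun g f => by rw [det_transpose_submatrix]; exact hbig f g)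
  exact ⟨A, B, hA, hB, fun φ => ⟨hEA φ, hEB φ⟩⟩

theorem exists_eq_smul_pow_of_minors (B : Matrix (Fin (N + 1)) (Fin (N + 1)) R)
    (hB : B.det ≠ 0) {P : R} (hP : P ≠ 0)
    (hminor : ∀ f g : Fin N → Fin (N + 1), ∃ μ : K, (B.submatrix f g).det = μ • P) :
    ∃ (w : Fin (N + 1) → K) (κ : K), P = κ • (∑ l, w l • B 0 l) ^ N := by
  choose μ hμ using hminor
  set G : Matrix (Fin (N + 1)) (Fin (N + 1)) K :=
    of fun k l => (-1) ^ ((l : ℕ) + k) * μ l.succAbove k.succAbove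
  set G' := G.map (algebraMap K R)
  set L := ∑ l, G l 0 • B 0 l
  have hadj : adjugate B = P • G' := by
    ext k l
    rw [adjugate_fin_succ_eq_det_submatrix, hμ, Matrix.smul_apply, smul_eq_mul,
      Algebra.smul_def]
    simp only [G', G, map_apply, of_apply, map_mul, map_pow, map_neg, map_one]
    ring
  have hPBG : P • (B * G') = B.det • (1 : Matrix (Fin (N + 1)) (Fin (N + 1)) R) := by
    rw [← Matrix.mul_smul, ← hadj, mul_adjugate]
  have hBG00 : (B * G') 0 0 = L := by
    simp only [mul_apply, G', map_apply, L, Algebra.smul_def, mul_comm]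
  have hdet : B.det = P * L := by
    simpa [hBG00] using (congrArg (· 0 0) hPBG).symm
  have hBG : B * G' = L • 1 := by
    ext k l
    refine mul_left_cancel₀ hP ?_
    simpa [hdet, mul_assoc] using congrArg (· k l) hPBG
  have hL : L ≠ 0 := by
    rintro h
    exact hB (by rw [hdet, h, mul_zero])
  have hpow : P * algebraMap K R G.det = L ^ N := by
    refine mul_left_cancel₀ hL ?_
    have := congrArg det hBG
    have hG' : G'.det = algebraMap K R G.det := ((algebraMap K R).map_det G).symm
    rw [det_mul, det_smul, det_one, Fintype.card_fin, mul_one, hdet, hG'] at this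
    rw [← pow_succ', ← this]
    ring
  have hG : G.det ≠ 0 := by
    rintro h
    rw [h, map_zero, mul_zero] at hpow
    exact hL (eq_zero_of_pow_eq_zero hpow.symm)
  refine ⟨fun l => G l 0, (G.det)⁻¹, ?_⟩
  rw [← hpow, Algebra.smul_def, ← mul_assoc, mul_comm _ P, mul_assoc, ← map_mul,
    inv_mul_cancel₀ hG, map_one, mul_one]

end Minors

theorem MvPolynomial.exists_eq_prod_isHomogeneous_of_minors {σ K m n : Type*} [Field K]
    (E : Matrix m n (MvPolynomial σ K)) (hlin : ∀ i j, (E i j).IsHomogeneous 1)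
    {P : MvPolynomial σ K} (hP : P ≠ 0) {N : ℕ}
    (hminor : ∀ (f : Fin (N + 1) → m) (g : Fin (N + 1) → n),
      ∃ μ : K, (E.submatrix f g).det = μ • P)
    (hbig : ∃ (f : Fin (N + 1 + 1) → m) (g : Fin (N + 1 + 1) → n), (E.submatrix f g).det ≠ 0) :
    ∃ L : Fin (N + 1) → MvPolynomial σ K, (∀ i, (L i).IsHomogeneous 1) ∧ P = ∏ i, L i := by
  obtain ⟨f, g, hfg⟩ := hbig
  obtain ⟨w, κ, hPL⟩ := exists_eq_smul_pow_of_minors (E.submatrix f g) hfg hP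
    fun f' g' => hminor (f ∘ f') (g ∘ g')
  set L := ∑ l, w l • E (f 0) (g l)
  have hL : L ∈ homogeneousSubmodule σ K 1 :=
    Submodule.sum_mem _ fun l _ => Submodule.smul_mem _ _ (hlin _ _)
  refine ⟨Fin.cons (κ • L) fun _ => L, Fin.cases (Submodule.smul_mem _ κ hL) fun _ => hL, ?_⟩
  rw [Fin.prod_cons, Finset.prod_const, Finset.card_univ, Fintype.card_fin, smul_mul_assoc,
    ← pow_succ']
  exact hPL

/-- Lemma 3.1 of the paper: if a degree-`r+1` polynomial `P` divides all
`(r+1)×(r+1)` minors of a space of matrices `E` (given as a matrix of linear forms)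
which is not of bounded rank `r`, then either `P` is a product of linear forms, or
(after changes of bases) `E` is supported in a common `(r+1)×(r+1)` block. -/
theorem stmt1 (a b c r : ℕ) (hr : r < min a b)
    (E : Matrix (Fin a) (Fin b) (MvPolynomial (Fin c) ℂ))
    (hlin : ∀ i j, (E i j).IsHomogeneous 1)
    (hnb : ∃ x : Fin c → ℂ, r < (E.map (MvPolynomial.eval x)).rank)
    (P : MvPolynomial (Fin c) ℂ) (hdeg : P.totalDegree = r + 1)
    (hdvd : ∀ (f : Fin (r + 1) → Fin a) (g : Fin (r + 1) → Fin b),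
      Function.Injective f → Function.Injective g → P ∣ (E.submatrix f g).det) :
    (∃ L : Fin (r + 1) → MvPolynomial (Fin c) ℂ,
      (∀ i, (L i).IsHomogeneous 1) ∧ P = ∏ i, L i) ∨
    (∃ (A' : Submodule ℂ (Fin a → ℂ)) (B' : Submodule ℂ (Fin b → ℂ)),
      Module.finrank ℂ A' = r + 1 ∧ Module.finrank ℂ B' = r + 1 ∧
      ∀ x : Fin c → ℂ,
        (∀ j, (fun i => MvPolynomial.eval x (E i j)) ∈ A') ∧
        (∀ i, (fun j => MvPolynomial.eval x (E i j)) ∈ B')) := by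
  obtain ⟨x₀, hx₀⟩ := hnb
  obtain ⟨f₀, g₀, hE₀⟩ := E.exists_det_submatrix_ne_zero_of_le_rank_map (eval x₀) hx₀
  have hP : P ≠ 0 := by
    rintro rfl
    exact hE₀ (zero_dvd_iff.1 (hdvd f₀ g₀ (injective_left_of_det_submatrix_ne_zero hE₀)
      (injective_right_of_det_submatrix_ne_zero hE₀)))
  have hminor := exists_det_submatrix_eq_smul_of_dvd E hlin hP hdeg hdvd
  by_cases hbig : ∀ (f : Fin (r + 1 + 1) → Fin a) (g : Fin (r + 1 + 1) → Fin b),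
      (E.submatrix f g).det = 0
  · right
    obtain ⟨A, B, hA, hB, hAB⟩ := exists_common_block_of_minors E
      (by simp; omega) (by simp; omega) hP hE₀ hminor hbig
    exact ⟨A, B, hA, hB, fun x => by simpa [coe_aeval_eq_eval] using hAB (aeval x)⟩
  · left
    push Not at hbig
    exact exists_eq_prod_isHomogeneous_of_minors E hlin hP hminor hbig
end

section
/- Let E ⊆ ℂ^a ⊗ ℂ^b be a linear space of matrices with 1 ≤ r ≤ min(a,b) − 2, such that the rank-at-most-r locus E_r has codimension 1 in E and some matrix in E has rank > r+1. Then the hypersurface E_r contains no irreducible hypersurface component of degree k > r/2 + 1. -/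
open MvPolynomial Matrix

/-- The dimension (over `ℂ`, in the sense of algebraic geometry) of a subset
`S ⊆ ℂ^σ`: the Krull dimension of the coordinate ring of its Zariski closure. -/
noncomputable def adim {σ : Type} (S : Set (σ → ℂ)) : ℕ :=
  (WithTop.untopD 0 (WithBot.unbotD 0 (ringKrullDim ((MvPolynomial σ ℂ) ⧸
      Ideal.span {p : MvPolynomial σ ℂ | ∀ x ∈ S, MvPolynomial.eval x p = 0}))))

/-!
Some matrix of `E` has rank at least `r + 2`, so some `(r+2)×(r+2)` submatrix `M` of `E` has
a determinant that is not identically zero. The entries of `adj M` are `(r+1)`-minors of `E`,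
so `P` divides `adj M` entrywise and `P ^ (r+2)` divides `det (adj M) = (det M) ^ (r+1)`; as `P`
is prime this forces `P ^ 2 ∣ det M`. But `det M` is a nonzero form of degree `r + 2`, whence
`2 deg P ≤ r + 2`.
-/

theorem Prime.sq_dvd_of_pow_succ_dvd_pow {R : Type*} [CommMonoidWithZero R] [IsCancelMulZero R]
    {p d : R} (hp : Prime p) {m : ℕ} (h : p ^ (m + 1) ∣ d ^ m) : p ^ 2 ∣ d := by
  obtain ⟨u, rfl⟩ := hp.dvd_of_dvd_pow (dvd_of_mul_left_dvd (pow_succ p m ▸ h))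
  rw [mul_pow, pow_succ, mul_dvd_mul_iff_left (pow_ne_zero m hp.ne_zero)] at h
  simpa [sq] using mul_dvd_mul_left p (hp.dvd_of_dvd_pow h)

namespace Matrix

theorem exists_linearIndependent_row_comp_of_le_rank {K m n : Type*} [Field K] [Fintype m]
    [Fintype n] (A : Matrix m n K) {k : ℕ} (hk : k ≤ A.rank) :
    ∃ f : Fin k → m, LinearIndependent K (A.row ∘ f) := by
  obtain ⟨κ, a, ha, hspan, hli⟩ := exists_linearIndependent' K A.row
  have := Finite.of_injective a ha
  have := Fintype.ofFinite κ
  rw [rank_eq_finrank_span_row, ← hspan, finrank_span_eq_card hli] at hk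
  obtain ⟨e⟩ := Function.Embedding.nonempty_of_card_le (α := Fin k) (β := κ) (by simpa using hk)
  exact ⟨a ∘ e, hli.comp e e.injective⟩

theorem exists_submatrix_det_ne_zero_of_le_rank {K m n : Type*} [Field K] [Fintype m]
    [Fintype n] (A : Matrix m n K) {k : ℕ} (hk : k ≤ A.rank) :
    ∃ (f : Fin k → m) (g : Fin k → n), Function.Injective f ∧ Function.Injective g ∧
      (A.submatrix f g).det ≠ 0 := by
  classical
  obtain ⟨f, hf⟩ := A.exists_linearIndependent_row_comp_of_le_rank hk
  have hrank : (A.submatrix f id)ᵀ.rank = k := by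
    rw [rank_transpose, LinearIndependent.rank_matrix (M := A.submatrix f id) hf,
      Fintype.card_fin]
  obtain ⟨g, hg⟩ := (A.submatrix f id)ᵀ.exists_linearIndependent_row_comp_of_le_rank hrank.ge
  refine ⟨f, g, hf.injective.of_comp, hg.injective.of_comp, ?_⟩
  exact ((isUnit_iff_isUnit_det _).mp (linearIndependent_cols_iff_isUnit.mp hg)).ne_zero

theorem sq_dvd_det_of_dvd_det_submatrix_succAbove {R : Type*} [CommRing R] [IsDomain R]
    {n : ℕ} (M : Matrix (Fin (n + 2)) (Fin (n + 2)) R) {p : R} (hp : Prime p)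
    (h : ∀ i j : Fin (n + 2), p ∣ (M.submatrix i.succAbove j.succAbove).det) :
    p ^ 2 ∣ M.det := by
  have hadj : ∀ i j, p ∣ M.adjugate i j := fun i j => by
    rw [adjugate_fin_succ_eq_det_submatrix]
    exact (h j i).mul_left _
  choose B hB using hadj
  have hdet : M.det ^ (n + 1) = p ^ (n + 2) * (Matrix.of B).det := by
    have hsmul : M.adjugate = p • Matrix.of B := Matrix.ext hB
    have := det_adjugate M
    rw [hsmul, det_smul, Fintype.card_fin] at this
    simpa using this.symm
  exact hp.sq_dvd_of_pow_succ_dvd_pow (hdet ▸ dvd_mul_right _ _)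

theorem isHomogeneous_det {σ ι R : Type*} [CommRing R] [Fintype ι] [DecidableEq ι]
    (M : Matrix ι ι (MvPolynomial σ R)) {d : ℕ} (h : ∀ i j, (M i j).IsHomogeneous d) :
    M.det.IsHomogeneous (Fintype.card ι * d) := by
  rw [det_apply]
  refine IsHomogeneous.sum _ _ _ fun τ _ => ?_
  have hprod := IsHomogeneous.prod Finset.univ (fun i => M (τ i) i) (fun _ => d)
    fun i _ => h (τ i) i
  rw [Finset.sum_const, Finset.card_univ, smul_eq_mul] at hprod
  exact (homogeneousSubmodule σ R _).toAddSubgroup.zsmul_mem hprod _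

end Matrix

theorem stmt3_general (a b c r : ℕ)
    (E : Matrix (Fin a) (Fin b) (MvPolynomial (Fin c) ℂ))
    (hlin : ∀ i j, (E i j).IsHomogeneous 1)
    (hnb : ∃ x : Fin c → ℂ, r + 1 < (E.map (MvPolynomial.eval x)).rank) :
    ¬ ∃ P : MvPolynomial (Fin c) ℂ, Irreducible P ∧ r + 2 < 2 * P.totalDegree ∧
      ∀ (f : Fin (r + 1) → Fin a) (g : Fin (r + 1) → Fin b),
        Function.Injective f → Function.Injective g → P ∣ (E.submatrix f g).det := by
  rintro ⟨P, hP, hdeg, hminors⟩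
  obtain ⟨x, hx⟩ := hnb
  obtain ⟨f, g, hf, hg, hdet⟩ := (E.map (eval x)).exists_submatrix_det_ne_zero_of_le_rank hx
  set M := E.submatrix f g
  have hM : M.det ≠ 0 := fun h => hdet <| by
    rw [submatrix_map, ← RingHom.mapMatrix_apply, ← RingHom.map_det, h, map_zero]
  have hsq : P ^ 2 ∣ M.det := M.sq_dvd_det_of_dvd_det_submatrix_succAbove hP.prime fun i j =>
    hminors _ _ (hf.comp Fin.succAbove_right_injective) (hg.comp Fin.succAbove_right_injective)
  have hhom : M.det.IsHomogeneous (r + 2) := by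
    simpa using M.isHomogeneous_det fun i j => hlin (f i) (g j)
  have hdvd := totalDegree_le_of_dvd_of_isDomain hsq hM
  rw [hhom.totalDegree hM, sq, totalDegree_mul_of_isDomain hP.ne_zero hP.ne_zero] at hdvd
  omega

/-- Corollary 3.3(1) of the paper: if `E` is a space of `a×b` matrices of linear forms with
`1 ≤ r ≤ min(a,b) - 2`, `codim E_r = 1`, and some matrix in `E` has rank `> r+1`, then the
hypersurface `E_r` has no irreducible component of degree `k > r/2 + 1`, i.e. there is no
irreducible polynomial of degree `> r/2 + 1` dividing all `(r+1)×(r+1)` minors of `E`. -/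
theorem stmt3 (a b c r : ℕ) (hr1 : 1 ≤ r) (hr2 : r + 2 ≤ min a b)
    (E : Matrix (Fin a) (Fin b) (MvPolynomial (Fin c) ℂ))
    (hlin : ∀ i j, (E i j).IsHomogeneous 1)
    (hnb : ∃ x : Fin c → ℂ, r + 1 < (E.map (MvPolynomial.eval x)).rank)
    (hcodim : c = adim {x : Fin c → ℂ | (E.map (MvPolynomial.eval x)).rank ≤ r} + 1) :
    ¬ ∃ P : MvPolynomial (Fin c) ℂ, Irreducible P ∧ r + 2 < 2 * P.totalDegree ∧
      ∀ (f : Fin (r + 1) → Fin a) (g : Fin (r + 1) → Fin b),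
        Function.Injective f → Function.Injective g → P ∣ (E.submatrix f g).det :=
  stmt3_general a b c r E hlin hnb
end

section
/- Let E be a 2×2 matrix whose entries are linear forms in variables x_1, …, x_c over ℂ, and suppose det(E) = x_1 x_3 − x_2². Then there exist invertible 2×2 complex matrices U, V such that U E V equals the symmetric matrix with rows (x_1, x_2) and (x_2, x_3). -/
open MvPolynomial Matrix

/-!
Write `E = ∑ₖ xₖ Aₖ` with constant matrices `Aₖ`. Evaluating `det E = x₁x₃ - x₂²` at `eₖ` and
`eₖ + eₗ` gives the determinants of the `Aₖ` and of their pairwise sums. Since `A₂` is invertible,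
`N₁ = A₁A₂⁻¹` and `N₃ = A₃A₂⁻¹` have trace zero, so Cayley–Hamilton gives `N₁² = N₃² = 0` and
`N₁N₃ + N₃N₁ = 1`; such a pair is simultaneously conjugate to the matrix units `e₁₂, e₂₁`, which
brings `A₁, A₂, A₃` to `e₁₁, e₁₂ + e₂₁, e₂₂`. In this normal form the determinant identity forces
every remaining `Aₖ` to vanish.
-/

theorem MvPolynomial.IsHomogeneous.exists_sum_smul_X_eq {σ R : Type*} [CommSemiring R]
    [Fintype σ] {p : MvPolynomial σ R} (hp : p.IsHomogeneous 1) :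
    ∃ c : σ → R, ∑ i, c i • X i = p :=
  (Submodule.mem_span_range_iff_exists_fun R).mp
    (homogeneousSubmodule_one_eq_span_X (σ := σ) (R := R) ▸ hp)

namespace Fintype

variable {ι R M : Type*} [Fintype ι] [DecidableEq ι] [Semiring R] [AddCommMonoid M] [Module R M]

lemma sum_single_one_smul (b : ι → M) (j : ι) : ∑ k, (Pi.single j 1 : ι → R) k • b k = b j := by
  simp

lemma sum_single_add_single_smul (b : ι → M) (j l : ι) :
    ∑ k, (Pi.single j 1 + Pi.single l 1 : ι → R) k • b k = b j + b l := by
  simp [add_smul, Finset.sum_add_distrib]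

end Fintype

namespace Matrix

section CommRing

variable {R : Type*} [CommRing R]

lemma det_add_one_fin_two (M : Matrix (Fin 2) (Fin 2) R) :
    det (M + 1) = det M + trace M + 1 := by
  simp [det_fin_two, trace_fin_two]
  ring

lemma mul_self_fin_two_of_trace_eq_zero {M : Matrix (Fin 2) (Fin 2) R} (h : trace M = 0) :
    M * M = -det M • 1 := by
  rw [trace_fin_two] at h
  rw [eta_fin_two M, mul_fin_two, det_fin_two_of, one_fin_two, smul_of]
  ext i j
  fin_cases i <;> fin_cases j <;> simp
  · linear_combination M 0 0 * h
  · linear_combination M 0 1 * h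
  · linear_combination M 1 0 * h
  · linear_combination M 1 1 * h

lemma det_sum_smul_mul_mul {n ι : Type*} [Fintype n] [DecidableEq n] [Fintype ι]
    (u v : Matrix n n R) (a : ι → Matrix n n R) (x : ι → R) :
    det (∑ k, x k • (u * a k * v)) = det u * det v * det (∑ k, x k • a k) := by
  have : ∑ k, x k • (u * a k * v) = u * (∑ k, x k • a k) * v := by
    simp [Finset.mul_sum, Finset.sum_mul]
  rw [this, det_mul, det_mul]
  ring

lemma eq_zero_of_det_add_eq_fin_two [IsReduced R] {M : Matrix (Fin 2) (Fin 2) R}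
    (h : det M = 0) (h₀ : det (M + !![1, 0; 0, 0]) = 0) (h₁ : det (M + !![0, 1; 1, 0]) = -1)
    (h₂ : det (M + !![0, 0; 0, 1]) = 0) : M = 0 := by
  rw [det_fin_two] at h
  simp only [det_fin_two, add_apply, of_apply, cons_val', cons_val_zero, cons_val_one,
    empty_val', cons_val_fin_one] at h₀ h₁ h₂
  have m₁₁ : M 1 1 = 0 := by linear_combination h₀ - h
  have m₀₀ : M 0 0 = 0 := by linear_combination h₂ - h
  have hsum : M 0 1 + M 1 0 = 0 := by linear_combination h - h₁
  have m₀₁ : M 0 1 = 0 :=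
    IsNilpotent.eq_zero ⟨2, by linear_combination M 0 1 * hsum + h - M 1 1 * m₀₀⟩
  have m₁₀ : M 1 0 = 0 := by linear_combination hsum - m₀₁
  ext i j
  fin_cases i <;> fin_cases j <;> assumption

end CommRing

variable {K : Type*} [Field K]

lemma exists_GL_intertwine_of_mulVec {N₀ N₂ : Matrix (Fin 2) (Fin 2) K} {w : Fin 2 → K}
    (hw : w ≠ 0) (hN₀w : N₀ *ᵥ w = 0) (hN₀N₂w : N₀ *ᵥ (N₂ *ᵥ w) = w)
    (hN₂N₂w : N₂ *ᵥ (N₂ *ᵥ w) = 0) :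
    ∃ G : GL (Fin 2) K,
      N₀ * (G : Matrix (Fin 2) (Fin 2) K) = (G : Matrix (Fin 2) (Fin 2) K) * !![0, 1; 0, 0] ∧
      N₂ * (G : Matrix (Fin 2) (Fin 2) K) = (G : Matrix (Fin 2) (Fin 2) K) * !![0, 0; 1, 0] := by
  let G : Matrix (Fin 2) (Fin 2) K := of fun i j => ![w, N₂ *ᵥ w] j i
  have hG : ∀ u, G *ᵥ u = u 0 • w + u 1 • (N₂ *ᵥ w) := by
    intro u
    ext i
    fin_cases i <;> simp [G, mulVec, dotProduct, Fin.sum_univ_two] <;> ring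
  have hdetG : G.det ≠ 0 := by
    intro h0
    obtain ⟨u, hu, hGu⟩ := exists_mulVec_eq_zero_iff.mpr h0
    rw [hG] at hGu
    have hu₁ : u 1 = 0 := by
      have := congrArg (N₀ *ᵥ ·) hGu
      simp only [mulVec_add, mulVec_smul, hN₀w, hN₀N₂w, smul_zero, zero_add, mulVec_zero] at this
      exact (smul_eq_zero.mp this).resolve_right hw
    have hu₀ : u 0 = 0 := by simpa [hu₁, hw] using hGu
    exact hu (funext fun i => by fin_cases i <;> assumption)
  have hGN₀ : N₀ * G = G * !![0, 1; 0, 0] := ext_of_mulVec_single fun j => by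
    rw [← mulVec_mulVec, ← mulVec_mulVec, hG, hG, mulVec_add, mulVec_smul, mulVec_smul, hN₀w,
      hN₀N₂w]
    fin_cases j <;> simp
  have hGN₂ : N₂ * G = G * !![0, 0; 1, 0] := ext_of_mulVec_single fun j => by
    rw [← mulVec_mulVec, ← mulVec_mulVec, hG, hG, mulVec_add, mulVec_smul, mulVec_smul, hN₂N₂w]
    fin_cases j <;> simp
  exact ⟨GeneralLinearGroup.mkOfDetNeZero G hdetG, hGN₀, hGN₂⟩

lemma exists_GL_intertwine_of_mul_self_eq_zero {N₀ N₂ : Matrix (Fin 2) (Fin 2) K}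
    (h₀ : N₀ * N₀ = 0) (h₂ : N₂ * N₂ = 0) (h : N₀ * N₂ + N₂ * N₀ = 1) :
    ∃ G : GL (Fin 2) K,
      N₀ * (G : Matrix (Fin 2) (Fin 2) K) = (G : Matrix (Fin 2) (Fin 2) K) * !![0, 1; 0, 0] ∧
      N₂ * (G : Matrix (Fin 2) (Fin 2) K) = (G : Matrix (Fin 2) (Fin 2) K) * !![0, 0; 1, 0] := by
  have hP : N₀ * N₂ ≠ 0 := by
    intro hP
    have : N₀ * N₂ = 1 := mul_eq_one_comm.mp (by simpa [hP] using h)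
    exact one_ne_zero (this.symm.trans hP)
  have hPP : N₀ * N₂ * (N₀ * N₂) = N₀ * N₂ := by
    calc N₀ * N₂ * (N₀ * N₂) = N₀ * (N₀ * N₂ + N₂ * N₀) * N₂ - N₀ * N₀ * (N₂ * N₂) := by
          noncomm_ring
      _ = N₀ * N₂ := by rw [h, h₀]; simp
  -- any nonzero vector in the image of the idempotent `N₀ N₂` works
  obtain ⟨v, hw⟩ : ∃ v, (N₀ * N₂) *ᵥ v ≠ 0 := by
    by_contra! hv
    exact hP (ext_of_mulVec_single fun i => by rw [hv, zero_mulVec])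
  refine exists_GL_intertwine_of_mulVec hw ?_ ?_ ?_
  · rw [mulVec_mulVec, ← mul_assoc, h₀, zero_mul, zero_mulVec]
  · rw [mulVec_mulVec, mulVec_mulVec, hPP]
  · rw [mulVec_mulVec, mulVec_mulVec, h₂, zero_mul, zero_mulVec]

lemma exists_GL_intertwine_of_det {N₀ N₂ : Matrix (Fin 2) (Fin 2) K}
    (h₀ : det N₀ = 0) (h₂ : det N₂ = 0) (h₀₁ : det (N₀ + 1) = 1) (h₂₁ : det (N₂ + 1) = 1)
    (h₀₂ : det (N₀ + N₂) = -1) :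
    ∃ G : GL (Fin 2) K,
      N₀ * (G : Matrix (Fin 2) (Fin 2) K) = (G : Matrix (Fin 2) (Fin 2) K) * !![0, 1; 0, 0] ∧
      N₂ * (G : Matrix (Fin 2) (Fin 2) K) = (G : Matrix (Fin 2) (Fin 2) K) * !![0, 0; 1, 0] := by
  have tr₀ : trace N₀ = 0 := by
    linear_combination (det_add_one_fin_two N₀).symm + h₀₁ - h₀
  have tr₂ : trace N₂ = 0 := by
    linear_combination (det_add_one_fin_two N₂).symm + h₂₁ - h₂
  have sq₀ : N₀ * N₀ = 0 := by
    rw [mul_self_fin_two_of_trace_eq_zero tr₀, h₀, neg_zero, zero_smul]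
  have sq₂ : N₂ * N₂ = 0 := by
    rw [mul_self_fin_two_of_trace_eq_zero tr₂, h₂, neg_zero, zero_smul]
  have anti : N₀ * N₂ + N₂ * N₀ = 1 := by
    have := mul_self_fin_two_of_trace_eq_zero (M := N₀ + N₂) (by rw [trace_add, tr₀, tr₂, add_zero])
    rw [h₀₂, add_mul, mul_add, mul_add, sq₀, sq₂] at this
    simpa using this
  exact exists_GL_intertwine_of_mul_self_eq_zero sq₀ sq₂ anti

lemma exists_GL_mul_mul_eq_of_det {A₀ A₁ A₂ : Matrix (Fin 2) (Fin 2) K}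
    (h₀ : det A₀ = 0) (h₁ : det A₁ = -1) (h₂ : det A₂ = 0)
    (h₀₁ : det (A₀ + A₁) = -1) (h₁₂ : det (A₁ + A₂) = -1) (h₀₂ : det (A₀ + A₂) = 1) :
    ∃ U V : GL (Fin 2) K,
      (U : Matrix (Fin 2) (Fin 2) K) * A₀ * (V : Matrix (Fin 2) (Fin 2) K) = !![1, 0; 0, 0] ∧
      (U : Matrix (Fin 2) (Fin 2) K) * A₁ * (V : Matrix (Fin 2) (Fin 2) K) = !![0, 1; 1, 0] ∧
      (U : Matrix (Fin 2) (Fin 2) K) * A₂ * (V : Matrix (Fin 2) (Fin 2) K) = !![0, 0; 0, 1] := by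
  have hA₁ : A₁ * A₁⁻¹ = 1 := mul_nonsing_inv A₁ (by simp [h₁])
  have hdet : ∀ X, det (X * A₁⁻¹) = -det X := by
    intro X
    simp [det_nonsing_inv, h₁]
  have hshift : ∀ X, X * A₁⁻¹ + 1 = (X + A₁) * A₁⁻¹ := by
    intro X
    rw [add_mul, hA₁]
  obtain ⟨G, hG₀, hG₂⟩ := exists_GL_intertwine_of_det (N₀ := A₀ * A₁⁻¹) (N₂ := A₂ * A₁⁻¹)
    (by rw [hdet, h₀, neg_zero]) (by rw [hdet, h₂, neg_zero])
    (by rw [hshift, hdet, h₀₁, neg_neg]) (by rw [hshift, hdet, add_comm, h₁₂, neg_neg])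
    (by rw [← add_mul, hdet, h₀₂])
  set g : Matrix (Fin 2) (Fin 2) K := ↑G
  set g' : Matrix (Fin 2) (Fin 2) K := ↑G⁻¹
  have hg : g' * g = 1 := G.inv_mul
  set J : Matrix (Fin 2) (Fin 2) K := !![0, 1; 1, 0]
  have hV : det (A₁⁻¹ * g * J) ≠ 0 := by
    simp [J, det_mul, det_nonsing_inv, h₁, g, G.det_ne_zero]
  have hconj : ∀ X, g' * X * (A₁⁻¹ * g * J) = g' * (X * A₁⁻¹ * g) * J := by
    intro X
    simp only [Matrix.mul_assoc]
  refine ⟨G⁻¹, GeneralLinearGroup.mkOfDetNeZero _ hV, ?_, ?_, ?_⟩ <;>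
    rw [GeneralLinearGroup.val_mkOfDetNeZero, hconj]
  · rw [hG₀, ← Matrix.mul_assoc, hg, Matrix.one_mul, mul_fin_two]
    norm_num
  · rw [hA₁, Matrix.one_mul, hg, Matrix.one_mul]
  · rw [hG₂, ← Matrix.mul_assoc, hg, Matrix.one_mul, mul_fin_two]
    norm_num

section Pencil

variable {ι : Type*} [Fintype ι] {b : ι → Matrix (Fin 2) (Fin 2) K} {i₀ i₁ i₂ : ι}

lemma eq_zero_of_det_sum_smul_eq (h₀₁ : i₀ ≠ i₁) (h₀₂ : i₀ ≠ i₂) (h₁₂ : i₁ ≠ i₂)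
    (hq : ∀ x : ι → K, det (∑ k, x k • b k) = x i₀ * x i₂ - x i₁ ^ 2)
    (hb₀ : b i₀ = !![1, 0; 0, 0]) (hb₁ : b i₁ = !![0, 1; 1, 0]) (hb₂ : b i₂ = !![0, 0; 0, 1])
    {k : ι} (hk₀ : k ≠ i₀) (hk₁ : k ≠ i₁) (hk₂ : k ≠ i₂) : b k = 0 := by
  classical
  apply eq_zero_of_det_add_eq_fin_two
  · rw [← Fintype.sum_single_one_smul (R := K) b k, hq]
    simp [hk₀.symm, hk₁.symm, hk₂.symm]
  · rw [← hb₀, ← Fintype.sum_single_add_single_smul (R := K), hq]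
    simp [hk₀, hk₁.symm, hk₂.symm, h₀₁, h₀₂]
  · rw [← hb₁, ← Fintype.sum_single_add_single_smul (R := K), hq]
    simp [hk₀.symm, hk₁, hk₂.symm, h₀₁.symm, h₁₂]
  · rw [← hb₂, ← Fintype.sum_single_add_single_smul (R := K), hq]
    simp [hk₀.symm, hk₁.symm, hk₂, h₀₂.symm, h₁₂.symm]

theorem exists_GL_mul_sum_smul_mul_eq {a : ι → Matrix (Fin 2) (Fin 2) K}
    (h₀₁ : i₀ ≠ i₁) (h₀₂ : i₀ ≠ i₂) (h₁₂ : i₁ ≠ i₂)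
    (hq : ∀ x : ι → K, det (∑ k, x k • a k) = x i₀ * x i₂ - x i₁ ^ 2) :
    ∃ U V : GL (Fin 2) K, ∀ x : ι → K,
      (U : Matrix (Fin 2) (Fin 2) K) * (∑ k, x k • a k) * (V : Matrix (Fin 2) (Fin 2) K) =
        !![x i₀, x i₁; x i₁, x i₂] := by
  classical
  obtain ⟨U, V, hU₀, hU₁, hU₂⟩ := exists_GL_mul_mul_eq_of_det (A₀ := a i₀) (A₁ := a i₁)
    (A₂ := a i₂)
    (by rw [← Fintype.sum_single_one_smul (R := K) a i₀, hq]; simp [h₀₁.symm, h₀₂.symm])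
    (by rw [← Fintype.sum_single_one_smul (R := K) a i₁, hq]; simp [h₀₁, h₁₂.symm])
    (by rw [← Fintype.sum_single_one_smul (R := K) a i₂, hq]; simp [h₀₂, h₁₂])
    (by rw [← Fintype.sum_single_add_single_smul (R := K), hq]; simp [h₀₁, h₀₂.symm, h₁₂.symm])
    (by rw [← Fintype.sum_single_add_single_smul (R := K), hq]; simp [h₀₁, h₀₂, h₁₂, h₁₂.symm])
    (by rw [← Fintype.sum_single_add_single_smul (R := K), hq]; simp [h₀₁.symm, h₀₂, h₁₂])
  set u : Matrix (Fin 2) (Fin 2) K := ↑U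
  set v : Matrix (Fin 2) (Fin 2) K := ↑V
  have huv : det u * det v = 1 := by
    have := congrArg det hU₁
    rw [det_mul, det_mul, ← Fintype.sum_single_one_smul (R := K) a i₁, hq] at this
    simpa [h₀₁, h₁₂.symm] using this
  have hq' : ∀ x : ι → K, det (∑ k, x k • (u * a k * v)) = x i₀ * x i₂ - x i₁ ^ 2 := by
    intro x
    rw [det_sum_smul_mul_mul, huv, one_mul, hq]
  have hstd : ∀ k, u * a k * v = !![(Pi.single k 1 : ι → K) i₀, (Pi.single k 1 : ι → K) i₁;
      (Pi.single k 1 : ι → K) i₁, (Pi.single k 1 : ι → K) i₂] := by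
    intro k
    by_cases hk₀ : k = i₀
    · subst hk₀; simp [hU₀, h₀₁, h₀₂]
    by_cases hk₁ : k = i₁
    · subst hk₁; simp [hU₁, h₀₁.symm, h₁₂]
    by_cases hk₂ : k = i₂
    · subst hk₂; simp [hU₂, h₀₂.symm, h₁₂.symm]
    rw [eq_zero_of_det_sum_smul_eq h₀₁ h₀₂ h₁₂ hq' hU₀ hU₁ hU₂ hk₀ hk₁ hk₂, eta_fin_two 0]
    simp [Ne.symm hk₀, Ne.symm hk₁, Ne.symm hk₂]
  refine ⟨U, V, fun x => ?_⟩
  change u * _ * v = _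
  simp only [Finset.mul_sum, Finset.sum_mul, Matrix.mul_smul, Matrix.smul_mul, hstd]
  ext i j
  fin_cases i <;> fin_cases j <;> simp [Matrix.sum_apply, Pi.single_apply]

end Pencil

end Matrix

/-- Lemma 7.1(1) of the paper: a `2×2` matrix of linear forms with determinant
`x₁x₃ - x₂²` equals `!![x₁, x₂; x₂, x₃]` up to changes of bases. -/
theorem stmt5 (c : ℕ) (hc : 3 ≤ c)
    (E : Matrix (Fin 2) (Fin 2) (MvPolynomial (Fin c) ℂ))
    (hlin : ∀ i j, (E i j).IsHomogeneous 1)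
    (hdet : E.det = X (⟨0, by omega⟩ : Fin c) * X ⟨2, by omega⟩ - X ⟨1, by omega⟩ ^ 2) :
    ∃ U V : GL (Fin 2) ℂ,
      (U : Matrix (Fin 2) (Fin 2) ℂ).map MvPolynomial.C * E *
        (V : Matrix (Fin 2) (Fin 2) ℂ).map MvPolynomial.C =
      !![X (⟨0, by omega⟩ : Fin c), X ⟨1, by omega⟩; X ⟨1, by omega⟩, X ⟨2, by omega⟩] := by
  choose coef hcoef using fun i j => (hlin i j).exists_sum_smul_X_eq
  let A : Fin c → Matrix (Fin 2) (Fin 2) ℂ := fun k => of fun i j => coef i j k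
  have hE : ∀ x, E.map (eval x) = ∑ k, x k • A k := by
    intro x
    ext i j
    simp [← hcoef, A, Matrix.sum_apply, mul_comm]
  obtain ⟨U, V, hUV⟩ := exists_GL_mul_sum_smul_mul_eq (a := A) (i₀ := ⟨0, by omega⟩)
    (i₁ := ⟨1, by omega⟩) (i₂ := ⟨2, by omega⟩) (by simp [Fin.ext_iff]) (by simp [Fin.ext_iff])
    (by simp [Fin.ext_iff]) fun x => by
      rw [← hE, ← RingHom.mapMatrix_apply, ← RingHom.map_det, hdet]
      simp
  simp only [← hE] at hUV
  refine ⟨U, V, ext fun i j => MvPolynomial.funext fun x => ?_⟩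
  have hmap : ((U : Matrix (Fin 2) (Fin 2) ℂ).map C * E *
      (V : Matrix (Fin 2) (Fin 2) ℂ).map C).map (eval x) = U * E.map (eval x) * V := by
    simp [Matrix.map_mul, Matrix.map_map, Function.comp_def]
  have := congrFun (congrFun (hmap.trans (hUV x)) i) j
  fin_cases i <;> fin_cases j <;> simpa using this
end

section
/- Let E be a 2×2 matrix whose entries are linear forms in variables x_1, …, x_c over ℂ, and suppose det(E) = x_1 x_4 − x_2 x_3. Then there exist invertible 2×2 complex matrices U, V such that U E V equals either the matrix with rows (x_1, x_2), (x_3, x_4), or its transpose (rows (x_1, x_3), (x_2, x_4)). -/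
/-!
Write `E = ∑ₖ xₖ • Aₖ` with constant matrices `Aₖ`. As `det (∑ₖ xₖ • Aₖ) = x₁x₄ - x₂x₃`
identically, polarization gives every `det Aₖ` and every value `detPolar Aₖ Aₗ` of the polar form
of `det`: they are those of the matrix units `Eᵢⱼ` placed as the variables in `!![x₁, x₂; x₃, x₄]`.
The singular matrices `A₁ = u vᵀ` and `A₄ = u' v'ᵀ` pair to `1`, so the matrices with columns
`u, u'` and with rows `v, v'` are invertible, and changing bases by them makes `A₁ = E₁₁`,
`A₄ = E₂₂`. Then `A₂` is a multiple of `E₁₂` or of `E₂₁` (the transposed case), made exact by a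
diagonal change of bases. Finally a `2 × 2` matrix is determined by its pairings with the four
matrix units, which determines `A₃` and forces `Aₖ = 0` for `k > 4`.
-/

open MvPolynomial Matrix

namespace MvPolynomial

theorem IsHomogeneous.eq_sum_C_coeff_single_mul_X {σ R : Type*} [CommRing R] [Fintype σ]
    {p : MvPolynomial σ R} (hp : p.IsHomogeneous 1) :
    p = ∑ k, C (coeff (Finsupp.single k 1) p) * X k := by
  classical
  ext m
  simp only [coeff_sum, coeff_C_mul, coeff_X]
  by_cases hm : m.degree = 1
  · obtain ⟨k, rfl⟩ : m ∈ Set.range (Finsupp.single · 1) := Finsupp.range_single_one ▸ hm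
    simp [Finsupp.single_left_inj one_ne_zero]
  · rw [hp.coeff_eq_zero hm, eq_comm]
    refine Finset.sum_eq_zero fun k _ => ?_
    rw [if_neg (by rintro rfl; simp at hm), mul_zero]

end MvPolynomial

namespace Matrix

theorem exists_eq_vecMulVec_of_det_eq_zero {K : Type*} [Field K] {M : Matrix (Fin 2) (Fin 2) K}
    (h : M.det = 0) : ∃ u v : Fin 2 → K, M = vecMulVec u v := by
  rw [det_fin_two] at h
  by_cases h00 : M 0 0 = 0
  · by_cases h10 : M 1 0 = 0
    · refine ⟨fun i => M i 1, ![0, 1], ?_⟩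
      ext i j
      fin_cases i <;> fin_cases j <;> simp [vecMulVec_apply, h00, h10]
    · have h01 : M 0 1 = 0 := by simpa [h00, h10] using h
      refine ⟨![0, 1], M 1, ?_⟩
      ext i j
      fin_cases i <;> fin_cases j <;> simp [vecMulVec_apply, h00, h01]
  · refine ⟨![1, M 1 0 / M 0 0], M 0, ?_⟩
    ext i j
    fin_cases i <;> fin_cases j <;> simp [vecMulVec_apply]
    · field_simp
    · field_simp
      linear_combination h

theorem GeneralLinearGroup.exists_coe_eq_transpose {n R : Type*} [Fintype n] [DecidableEq n]
    [CommRing R] (U : GL n R) : ∃ U' : GL n R, (U' : Matrix n n R) = (U : Matrix n n R)ᵀ :=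
  ⟨.mk'' _ (isUnit_det_transpose _ ((isUnit_iff_isUnit_det _).mp U.isUnit)), rfl⟩

theorem map_pi_single_of_injective {R ι n : Type*} [CommRing R] [DecidableEq ι] [DecidableEq n]
    {p : Matrix n n ι} (hp : Function.Injective fun ij : n × n => p ij.1 ij.2) (i j : n) :
    p.map (Pi.single (p i j) (1 : R)) = single i j 1 := by
  have hpij : ∀ a b, p a b = p i j ↔ i = a ∧ j = b := fun a b =>
    ⟨fun h => by simpa [Prod.ext_iff, eq_comm] using @hp (a, b) (i, j) h,
      by rintro ⟨rfl, rfl⟩; rfl⟩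
  ext a b
  simp only [map_apply, single_apply, Pi.single_apply, hpij]

section DetPolar

variable {R : Type*} [CommRing R]

def detPolar (M N : Matrix (Fin 2) (Fin 2) R) : R :=
  M 0 0 * N 1 1 + M 1 1 * N 0 0 - M 0 1 * N 1 0 - M 1 0 * N 0 1

theorem det_add_fin_two (M N : Matrix (Fin 2) (Fin 2) R) :
    (M + N).det = M.det + N.det + detPolar M N := by
  simp only [det_fin_two, detPolar, add_apply]
  ring

theorem ext_of_detPolar_single {M N : Matrix (Fin 2) (Fin 2) R}
    (h : ∀ i j, detPolar (single i j 1) M = detPolar (single i j 1) N) : M = N := by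
  have h00 := h 0 0
  have h01 := h 0 1
  have h10 := h 1 0
  have h11 := h 1 1
  simp [detPolar] at h00 h01 h10 h11
  ext i j
  fin_cases i <;> fin_cases j <;> assumption

end DetPolar

def HasGenericDet {R ι n : Type*} [CommRing R] [Fintype ι] [Fintype n] [DecidableEq n]
    (A : ι → Matrix n n R) (p : Matrix n n ι) : Prop :=
  ∀ x : ι → R, (∑ k, x k • A k).det = (p.map x).det

namespace HasGenericDet

section General

variable {R ι n : Type*} [CommRing R] [Fintype ι] [Fintype n] [DecidableEq n]
  {A : ι → Matrix n n R} {p : Matrix n n ι}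

theorem det_eq [DecidableEq ι] (h : HasGenericDet A p) (k : ι) :
    (A k).det = (p.map (Pi.single k 1)).det := by
  simpa [Pi.single_apply, ite_smul] using h (Pi.single k 1)

theorem mul_mul (h : HasGenericDet A p) {U V : Matrix n n R} (hUV : U.det * V.det = 1) :
    HasGenericDet (fun k => U * A k * V) p := by
  intro x
  have hsum : ∑ k, x k • (U * A k * V) = U * (∑ k, x k • A k) * V := by
    simp [Finset.mul_sum, Finset.sum_mul]
  rw [hsum, det_mul, det_mul, h x]
  linear_combination (p.map x).det * hUV

theorem transpose (h : HasGenericDet A p) : HasGenericDet (fun k => (A k)ᵀ) p := by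
  intro x
  rw [← h x, ← det_transpose, transpose_sum]
  simp [transpose_smul]

end General

section FinTwo

variable {R ι : Type*} [CommRing R] [Fintype ι] [DecidableEq ι]
  {A : ι → Matrix (Fin 2) (Fin 2) R} {p : Matrix (Fin 2) (Fin 2) ι}

theorem detPolar_eq (h : HasGenericDet A p) (k l : ι) :
    detPolar (A k) (A l) = detPolar (p.map (Pi.single k 1)) (p.map (Pi.single l 1)) := by
  have hkl := h (Pi.single k 1 + Pi.single l 1)
  have hsum : ∑ m, (Pi.single k 1 + Pi.single l 1 : ι → R) m • A m = A k + A l := by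
    simp [add_smul, Finset.sum_add_distrib, Pi.single_apply, ite_smul]
  have hmap : p.map (Pi.single k 1 + Pi.single l 1) =
      p.map (Pi.single k 1) + p.map (Pi.single l (1 : R)) := rfl
  rw [hsum, hmap, det_add_fin_two, det_add_fin_two, h.det_eq k, h.det_eq l] at hkl
  linear_combination hkl

variable (hp : Function.Injective fun ij : Fin 2 × Fin 2 => p ij.1 ij.2)
include hp

theorem det_apply_eq_zero (h : HasGenericDet A p) (i j : Fin 2) : (A (p i j)).det = 0 := by
  rw [h.det_eq, map_pi_single_of_injective hp]
  fin_cases i <;> fin_cases j <;> simp [det_fin_two]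

theorem detPolar_apply_eq (h : HasGenericDet A p) (i j i' j' : Fin 2) :
    detPolar (A (p i j)) (A (p i' j')) = detPolar (single i j 1) (single i' j' 1) := by
  rw [h.detPolar_eq, map_pi_single_of_injective hp, map_pi_single_of_injective hp]

theorem eq_map_pi_single_of_apply_eq_single (h : HasGenericDet A p)
    (h00 : A (p 0 0) = single 0 0 1) (h11 : A (p 1 1) = single 1 1 1)
    (h01 : A (p 0 1) = single 0 1 1) (k : ι) : A k = p.map (Pi.single k 1) := by
  have h10 : A (p 1 0) = single 1 0 1 := by
    have e00 := h.detPolar_apply_eq hp 0 0 1 0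
    have e11 := h.detPolar_apply_eq hp 1 1 1 0
    have e01 := h.detPolar_apply_eq hp 0 1 1 0
    have hdet := h.det_apply_eq_zero hp 1 0
    rw [h00] at e00
    rw [h11] at e11
    rw [h01] at e01
    simp [detPolar, det_fin_two] at e00 e11 e01 hdet
    ext i j
    fin_cases i <;> fin_cases j <;> simp_all
  have hall : ∀ i j, A (p i j) = single i j 1 := by
    intro i j
    fin_cases i <;> fin_cases j <;> assumption
  refine ext_of_detPolar_single fun i j => ?_
  have := h.detPolar_eq (p i j) k
  rwa [hall, map_pi_single_of_injective hp] at this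

theorem apply_zero_one_eq_smul_single_or [NoZeroDivisors R] (h : HasGenericDet A p)
    (h00 : A (p 0 0) = single 0 0 1) (h11 : A (p 1 1) = single 1 1 1) :
    A (p 0 1) = A (p 0 1) 0 1 • single 0 1 1 ∨ (A (p 0 1))ᵀ = A (p 0 1) 1 0 • single 0 1 1 := by
  have e00 := h.detPolar_apply_eq hp 0 0 0 1
  have e11 := h.detPolar_apply_eq hp 1 1 0 1
  have hdet := h.det_apply_eq_zero hp 0 1
  rw [h00] at e00
  rw [h11] at e11
  simp [detPolar] at e00 e11
  simp [det_fin_two, e00, e11] at hdet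
  rcases hdet with hb | hc
  · right
    ext i j
    fin_cases i <;> fin_cases j <;> simp_all
  · left
    ext i j
    fin_cases i <;> fin_cases j <;> simp_all

end FinTwo

section Field

variable {K ι : Type*} [Field K] [Fintype ι] [DecidableEq ι]
  {A : ι → Matrix (Fin 2) (Fin 2) K} {p : Matrix (Fin 2) (Fin 2) ι}
  (hp : Function.Injective fun ij : Fin 2 × Fin 2 => p ij.1 ij.2)
include hp

theorem exists_gl_mul_mul_apply_diag_eq_single (h : HasGenericDet A p) :
    ∃ U V : GL (Fin 2) K,
      HasGenericDet (fun k => (U : Matrix _ _ K) * A k * (V : Matrix _ _ K)) p ∧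
      (U : Matrix _ _ K) * A (p 0 0) * (V : Matrix _ _ K) = single 0 0 1 ∧
      (U : Matrix _ _ K) * A (p 1 1) * (V : Matrix _ _ K) = single 1 1 1 := by
  obtain ⟨u, v, huv⟩ := exists_eq_vecMulVec_of_det_eq_zero (h.det_apply_eq_zero hp 0 0)
  obtain ⟨u', v', huv'⟩ := exists_eq_vecMulVec_of_det_eq_zero (h.det_apply_eq_zero hp 1 1)
  let R : Matrix (Fin 2) (Fin 2) K := of fun i j => ![u, u'] j i
  let S : Matrix (Fin 2) (Fin 2) K := of ![v, v']
  have hRS_single : ∀ i, R * single i i 1 * S = vecMulVec (![u, u'] i) (![v, v'] i) := by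
    intro i
    ext a b
    fin_cases i <;> simp [R, S, mul_apply, Fin.sum_univ_two, single_apply, vecMulVec_apply]
  have hR0 : R * single 0 0 1 * S = A (p 0 0) := by rw [hRS_single, huv]; rfl
  have hR1 : R * single 1 1 1 * S = A (p 1 1) := by rw [hRS_single, huv']; rfl
  have hdet : R.det * S.det = 1 := by
    have hone : (single 0 0 1 + single 1 1 1 : Matrix (Fin 2) (Fin 2) K) = 1 := by
      ext i j
      fin_cases i <;> fin_cases j <;> simp
    have hmul : R * S = A (p 0 0) + A (p 1 1) := by
      rw [← hR0, ← hR1, ← add_mul, ← mul_add, hone, mul_one]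
    rw [← det_mul, hmul, det_add_fin_two, h.det_apply_eq_zero hp, h.det_apply_eq_zero hp,
      h.detPolar_apply_eq hp]
    simp [detPolar]
  let R' := GeneralLinearGroup.mkOfDetNeZero R (left_ne_zero_of_mul_eq_one hdet)
  let S' := GeneralLinearGroup.mkOfDetNeZero S (right_ne_zero_of_mul_eq_one hdet)
  have cancel : ∀ M, ((R'⁻¹ : GL (Fin 2) K) : Matrix _ _ K) * (R * M * S) *
      ((S'⁻¹ : GL (Fin 2) K) : Matrix _ _ K) = M := by
    intro M
    rw [show R = R'.val from rfl, show S = S'.val from rfl]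
    simp [mul_assoc]
  refine ⟨R'⁻¹, S'⁻¹, h.mul_mul ?_, by rw [← hR0, cancel], by rw [← hR1, cancel]⟩
  simp [R', S', coe_units_inv, det_nonsing_inv, ← mul_inv, hdet]

theorem exists_gl_mul_mul_eq_of_apply_eq_smul_single (h : HasGenericDet A p)
    (h00 : A (p 0 0) = single 0 0 1) (h11 : A (p 1 1) = single 1 1 1) {b : K}
    (h01 : A (p 0 1) = b • single 0 1 1) :
    ∃ U V : GL (Fin 2) K,
      ∀ k, (U : Matrix _ _ K) * A k * (V : Matrix _ _ K) = p.map (Pi.single k 1) := by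
  have hb : b ≠ 0 := by
    rintro rfl
    have := h.detPolar_apply_eq hp 0 1 1 0
    rw [h01] at this
    simp [detPolar] at this
  let D : Matrix (Fin 2) (Fin 2) K := diagonal ![1, b]
  let D' : Matrix (Fin 2) (Fin 2) K := diagonal ![1, b⁻¹]
  have hDD' : D.det * D'.det = 1 := by simp [D, D', det_diagonal, hb]
  have hB := (h.mul_mul hDD').eq_map_pi_single_of_apply_eq_single hp ?_ ?_ ?_
  · exact ⟨.mkOfDetNeZero D (left_ne_zero_of_mul_eq_one hDD'),
      .mkOfDetNeZero D' (right_ne_zero_of_mul_eq_one hDD'), hB⟩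
  all_goals
    ext i j
    fin_cases i <;> fin_cases j <;> simp [D, D', h00, h11, h01, hb]

theorem exists_gl_mul_mul_eq (h : HasGenericDet A p) :
    ∃ U V : GL (Fin 2) K,
      (∀ k, (U : Matrix _ _ K) * A k * (V : Matrix _ _ K) = p.map (Pi.single k 1)) ∨
      (∀ k, (U : Matrix _ _ K) * A k * (V : Matrix _ _ K) = pᵀ.map (Pi.single k 1)) := by
  obtain ⟨U₀, V₀, hN, h00, h11⟩ := h.exists_gl_mul_mul_apply_diag_eq_single hp
  rcases hN.apply_zero_one_eq_smul_single_or hp h00 h11 with h01 | h01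
  · obtain ⟨U, V, hUV⟩ := hN.exists_gl_mul_mul_eq_of_apply_eq_smul_single hp h00 h11 h01
    exact ⟨U * U₀, V₀ * V, Or.inl fun k => by simpa [mul_assoc] using hUV k⟩
  · obtain ⟨U, V, hUV⟩ := hN.transpose.exists_gl_mul_mul_eq_of_apply_eq_smul_single hp
      (by simp only [h00, transpose_single]) (by simp only [h11, transpose_single]) h01
    obtain ⟨U', hU'⟩ := GeneralLinearGroup.exists_coe_eq_transpose U
    obtain ⟨V', hV'⟩ := GeneralLinearGroup.exists_coe_eq_transpose V
    refine ⟨V' * U₀, V₀ * U', Or.inr fun k => ?_⟩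
    rw [transpose_map, ← hUV k]
    simp [hU', hV', transpose_mul, mul_assoc]

end Field

end HasGenericDet

section LinearForms

variable {σ R m n : Type*} [CommRing R] [Fintype σ]

theorem eq_sum_X_smul_map_C_map_coeff (E : Matrix m n (MvPolynomial σ R))
    (hE : ∀ i j, (E i j).IsHomogeneous 1) :
    E = ∑ k, (X k : MvPolynomial σ R) • (E.map (coeff (Finsupp.single k 1))).map C := by
  ext i j
  rw [(hE i j).eq_sum_C_coeff_single_mul_X]
  simp [sum_apply, mul_comm]

theorem hasGenericDet_map_coeff [Fintype n] [DecidableEq n] (E : Matrix n n (MvPolynomial σ R))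
    (hE : ∀ i j, (E i j).IsHomogeneous 1) (p : Matrix n n σ) (hdet : E.det = (p.map X).det) :
    HasGenericDet (fun k => E.map (coeff (Finsupp.single k 1))) p := by
  intro x
  have hEx : E.map (eval x) = ∑ k, x k • E.map (coeff (Finsupp.single k 1)) := by
    conv_lhs => rw [eq_sum_X_smul_map_C_map_coeff E hE]
    ext i j
    simp [sum_apply]
  calc (∑ k, x k • E.map (coeff (Finsupp.single k 1))).det = eval x E.det := by
        rw [← hEx, RingHom.map_det]; rfl
    _ = (p.map x).det := by
        rw [hdet, RingHom.map_det]
        congr 1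
        ext
        simp

theorem map_C_mul_sum_X_smul_map_C_mul [Fintype n] (U V : Matrix n n R) (A : σ → Matrix n n R) :
    U.map C * (∑ k, (X k : MvPolynomial σ R) • (A k).map (C : R →+* MvPolynomial σ R)) *
      V.map C =
      ∑ k, (X k : MvPolynomial σ R) • (U * A k * V).map (C : R →+* MvPolynomial σ R) := by
  simp [Finset.mul_sum, Finset.sum_mul, Matrix.map_mul]

theorem sum_X_smul_map_C_map_pi_single [DecidableEq σ] (p : Matrix m n σ) :
    ∑ k, (X k : MvPolynomial σ R) • (p.map (Pi.single k (1 : R))).map C = p.map X := by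
  refine Matrix.ext fun i j => ?_
  simp [sum_apply, Pi.single_apply, apply_ite C]

end LinearForms

theorem exists_gl_map_C_mul_mul_map_C_eq {K σ : Type*} [Field K] [Fintype σ] [DecidableEq σ]
    (E : Matrix (Fin 2) (Fin 2) (MvPolynomial σ K)) (hE : ∀ i j, (E i j).IsHomogeneous 1)
    (p : Matrix (Fin 2) (Fin 2) σ) (hp : Function.Injective fun ij : Fin 2 × Fin 2 => p ij.1 ij.2)
    (hdet : E.det = (p.map X).det) :
    ∃ U V : GL (Fin 2) K,
      (U : Matrix (Fin 2) (Fin 2) K).map C * E * (V : Matrix (Fin 2) (Fin 2) K).map C = p.map X ∨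
      (U : Matrix (Fin 2) (Fin 2) K).map C * E * (V : Matrix (Fin 2) (Fin 2) K).map C =
        pᵀ.map X := by
  obtain ⟨U, V, hUV⟩ := (hasGenericDet_map_coeff E hE p hdet).exists_gl_mul_mul_eq hp
  refine ⟨U, V, ?_⟩
  rw [eq_sum_X_smul_map_C_map_coeff E hE, map_C_mul_sum_X_smul_map_C_mul]
  refine hUV.imp (fun h => ?_) (fun h => ?_) <;> simp only [h, sum_X_smul_map_C_map_pi_single]

end Matrix

/-- Lemma 7.1(2) of the paper: a `2×2` matrix of linear forms with determinant
`x₁x₄ - x₂x₃` equals `!![x₁, x₂; x₃, x₄]` or its transpose up to changes of bases. -/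
theorem stmt6 (c : ℕ) (hc : 4 ≤ c)
    (E : Matrix (Fin 2) (Fin 2) (MvPolynomial (Fin c) ℂ))
    (hlin : ∀ i j, (E i j).IsHomogeneous 1)
    (hdet : E.det = X (⟨0, by omega⟩ : Fin c) * X ⟨3, by omega⟩ -
      X ⟨1, by omega⟩ * X ⟨2, by omega⟩) :
    ∃ U V : GL (Fin 2) ℂ,
      (U : Matrix (Fin 2) (Fin 2) ℂ).map MvPolynomial.C * E *
        (V : Matrix (Fin 2) (Fin 2) ℂ).map MvPolynomial.C =
        !![X (⟨0, by omega⟩ : Fin c), X ⟨1, by omega⟩; X ⟨2, by omega⟩, X ⟨3, by omega⟩] ∨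
      (U : Matrix (Fin 2) (Fin 2) ℂ).map MvPolynomial.C * E *
        (V : Matrix (Fin 2) (Fin 2) ℂ).map MvPolynomial.C =
        !![X (⟨0, by omega⟩ : Fin c), X ⟨2, by omega⟩; X ⟨1, by omega⟩, X ⟨3, by omega⟩] := by
  let p : Matrix (Fin 2) (Fin 2) (Fin c) :=
    !![⟨0, by omega⟩, ⟨1, by omega⟩; ⟨2, by omega⟩, ⟨3, by omega⟩]
  have hp : Function.Injective fun ij : Fin 2 × Fin 2 => p ij.1 ij.2 := by
    rintro ⟨i, j⟩ ⟨i', j'⟩ h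
    fin_cases i <;> fin_cases j <;> fin_cases i' <;> fin_cases j' <;> simp [p, Fin.ext_iff] at h ⊢
  obtain ⟨U, V, h⟩ := exists_gl_map_C_mul_mul_map_C_eq E hlin p hp
    (by rw [hdet, det_fin_two]; rfl)
  refine ⟨U, V, h.imp (fun h => ?_) (fun h => ?_)⟩ <;> rw [h] <;>
    ext i j <;> fin_cases i <;> fin_cases j <;> rfl
end

section
/- Let E be the 4-dimensional space of 4×4 matrices of linear forms with rows (x_1, x_2, 0, 0), (x_3, x_4, 0, x_1), (0, 0, x_1, x_2), (0, 0, x_3, x_4). Then det(E) = (x_1x_4 − x_2x_3)², yet E does not have constant rank on the quadric {x_1x_4 − x_2x_3 = 0}: there exist points of that quadric where the matrix has rank 2 and points where it has rank 3. -/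
/-! `E10` is block upper triangular with both diagonal blocks equal to the generic `2 × 2` matrix
`!![x₁, x₂; x₃, x₄]`, so its determinant is the square of the quadric. The off-diagonal block
`!![0, 0; 0, x₁]` is what breaks constant rank: at the points `(0, 1, 0, 0)` and `(1, 0, 0, 0)` of the
quadric, `E10` specializes to a permutation matrix with two, respectively one, of its rows erased. -/

open MvPolynomial Matrix

/-- The counterexample matrix of Remark 3.7. -/
noncomputable def E10 : Matrix (Fin 4) (Fin 4) (MvPolynomial (Fin 4) ℂ) :=
  !![X 0, X 1, 0, 0;
     X 2, X 3, 0, X 0;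
     0, 0, X 0, X 1;
     0, 0, X 2, X 3]

theorem Matrix.rank_diagonal_mul_permMatrix {n K : Type*} [Fintype n] [DecidableEq n] [Field K]
    [DecidableEq K] (d : n → K) (σ : Equiv.Perm n) :
    (diagonal d * σ.permMatrix K).rank = Fintype.card {i // d i ≠ 0} := by
  have hσ : IsUnit (σ.permMatrix K).det := by
    rw [det_permutation]
    exact σ.sign.isUnit.map (Int.castRingHom K)
  rw [rank_mul_eq_left_of_isUnit_det _ _ hσ, rank_diagonal]

theorem E10_eq_reindex_fromBlocks :
    E10 = reindex finSumFinEquiv finSumFinEquiv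
      (fromBlocks !![X 0, X 1; X 2, X 3] !![0, 0; 0, X 0] 0 !![X 0, X 1; X 2, X 3]) := by
  ext i j
  fin_cases i <;> fin_cases j <;> rfl

theorem det_E10 : E10.det = (X 0 * X 3 - X 1 * X 2) ^ 2 := by
  rw [E10_eq_reindex_fromBlocks, det_reindex_self, det_fromBlocks_zero₂₁, det_fin_two_of, sq]

theorem E10_map_eval_0100 :
    E10.map (eval ![0, 1, 0, 0]) =
      diagonal ![1, 0, 1, 0] * (Equiv.swap 0 1 * Equiv.swap 2 3 : Equiv.Perm (Fin 4)).permMatrix ℂ := by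
  ext i j
  fin_cases i <;> fin_cases j <;>
    simp [E10, PEquiv.toMatrix_apply, Equiv.swap_apply_def, -permMatrix_mul]

theorem E10_map_eval_1000 :
    E10.map (eval ![1, 0, 0, 0]) =
      diagonal ![1, 1, 1, 0] * (Equiv.swap 1 3 : Equiv.Perm (Fin 4)).permMatrix ℂ := by
  ext i j
  fin_cases i <;> fin_cases j <;> simp [E10, Equiv.swap_apply_def]

theorem rank_E10_map_eval_0100 : (E10.map (eval ![0, 1, 0, 0])).rank = 2 := by
  rw [E10_map_eval_0100, rank_diagonal_mul_permMatrix]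
  simp [Fintype.card_subtype, Finset.filter, Fin.univ_succ]

theorem rank_E10_map_eval_1000 : (E10.map (eval ![1, 0, 0, 0])).rank = 3 := by
  rw [E10_map_eval_1000, rank_diagonal_mul_permMatrix]
  simp [Fintype.card_subtype, Finset.filter, Fin.univ_succ]

/-- Remark 3.7 (counterexample to Proposition 1 of Beauville): `det E10 = (x₁x₄ - x₂x₃)²`,
but `E10` does not have constant rank on the quadric `{x₁x₄ - x₂x₃ = 0}`: there are points
of the quadric where the matrix has rank `2` and points where it has rank `3`. -/
theorem stmt10 :
    E10.det = (X 0 * X 3 - X 1 * X 2) ^ 2 ∧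
    ∃ p q : Fin 4 → ℂ,
      MvPolynomial.eval p (X 0 * X 3 - X 1 * X 2 : MvPolynomial (Fin 4) ℂ) = 0 ∧
      MvPolynomial.eval q (X 0 * X 3 - X 1 * X 2 : MvPolynomial (Fin 4) ℂ) = 0 ∧
      (E10.map (MvPolynomial.eval p)).rank = 2 ∧
      (E10.map (MvPolynomial.eval q)).rank = 3 :=
  ⟨det_E10, ![0, 1, 0, 0], ![1, 0, 0, 0], by simp, by simp,
    rank_E10_map_eval_0100, rank_E10_map_eval_1000⟩
end

section
/- Let E ⊆ ℂ^a ⊗ ℂ^b be a linear space of matrices written in block form E = [[0, H],[G, D]] where the top-left κ×κ' block is identically zero, and suppose G is a 1-generic (E1-generic) space of matrices of size s×κ'. If every (r+1)×(r+1) minor of E formed from one entry of G and an r×r minor of H must vanish or share a common factor as dictated by codim(E_r) ≤ n, and κ' ≥ r+1 > s, then either codim_G(G_{s−1}) ≤ n or codim_H(H_{r−s}) ≤ n. -/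
open MvPolynomial Matrix

namespace Matrix

variable {F l m n o : Type*} [Field F] [Fintype m] [Fintype o]

theorem rank_add_rank_le_rank_fromBlocks_zero (B : Matrix l o F) (C : Matrix n m F)
    (D : Matrix n o F) : C.rank + B.rank ≤ (fromBlocks 0 B C D).rank := by
  set W := LinearMap.range (fromBlocks (0 : Matrix l m F) B C D).mulVecLin
  let top : W →ₗ[F] l → F := (LinearMap.funLeft F F Sum.inl).domRestrict W
  let bottom : W →ₗ[F] n → F := (LinearMap.funLeft F F Sum.inr).comp W.subtype
  have hB : LinearMap.range B.mulVecLin ≤ LinearMap.range top := by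
    rintro _ ⟨w, rfl⟩
    exact ⟨⟨_, Sum.elim 0 w, rfl⟩, by ext; simp [top, fromBlocks_mulVec, LinearMap.funLeft]⟩
  have hC : LinearMap.range C.mulVecLin ≤ (LinearMap.ker top).map bottom := by
    rintro _ ⟨v, rfl⟩
    refine ⟨⟨_, Sum.elim v 0, rfl⟩, ?_, ?_⟩ <;> ext <;>
      simp [top, bottom, fromBlocks_mulVec, LinearMap.funLeft]
  calc C.rank + B.rank
      ≤ Module.finrank F (LinearMap.ker top) + Module.finrank F (LinearMap.range top) :=
        add_le_add ((Submodule.finrank_mono hC).trans (Submodule.finrank_map_le _ _))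
          (Submodule.finrank_mono hB)
    _ = (fromBlocks 0 B C D).rank := by
        rw [add_comm, LinearMap.finrank_range_add_finrank_ker]; rfl

end Matrix

theorem Order.krullDim_le_sup_of_subset_union {α : Type*} [Preorder α] {s t u : Set α}
    (ht : IsUpperSet t) (hu : IsUpperSet u) (h : s ⊆ t ∪ u) :
    krullDim s ≤ krullDim t ⊔ krullDim u := by
  refine iSup_le fun p => ?_
  have lift : ∀ v : Set α, IsUpperSet v → p.head.1 ∈ v →
      (p.length : WithBot ℕ∞) ≤ krullDim v :=
    fun v hv hhead => LTSeries.length_le_krullDim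
      ⟨p.length, fun i => ⟨p i, hv (p.monotone (Fin.zero_le i)) hhead⟩, p.step⟩
  rcases h p.head.2 with hhead | hhead
  · exact le_sup_of_le_left (lift t ht hhead)
  · exact le_sup_of_le_right (lift u hu hhead)

theorem ringKrullDim_quotient_le_sup_of_mul_le {R : Type*} [CommRing R] {I J K : Ideal R}
    (h : I * J ≤ K) :
    ringKrullDim (R ⧸ K) ≤ ringKrullDim (R ⧸ I) ⊔ ringKrullDim (R ⧸ J) := by
  have isUpperSet_zeroLocus (L : Ideal R) : IsUpperSet (PrimeSpectrum.zeroLocus (L : Set R)) :=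
    fun _ _ hpq hp _ hx => hpq (hp hx)
  simp only [ringKrullDim_quotient]
  refine Order.krullDim_le_sup_of_subset_union (isUpperSet_zeroLocus I) (isUpperSet_zeroLocus J) ?_
  rw [← PrimeSpectrum.zeroLocus_mul]
  exact PrimeSpectrum.zeroLocus_anti_mono_ideal h

theorem adim_le_max_of_subset_union {σ : Type} [Finite σ] {S A B : Set (σ → ℂ)}
    (h : S ⊆ A ∪ B) : adim S ≤ max (adim A) (adim B) := by
  let I (T : Set (σ → ℂ)) : Ideal (MvPolynomial σ ℂ) :=
    Ideal.span {p | ∀ x ∈ T, MvPolynomial.eval x p = 0}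
  have hmul : I A * I B ≤ I S := by
    rw [Ideal.span_mul_span']
    refine Ideal.span_mono ?_
    rintro _ ⟨p, hp, q, hq, rfl⟩ x hx
    rcases h hx with hxA | hxB <;> simp [hp x, hq x, *]
  have hfin (T : Set (σ → ℂ)) : ringKrullDim (MvPolynomial σ ℂ ⧸ I T) ≠ ⊤ := by
    refine ne_top_of_le_ne_top ?_ (ringKrullDim_quotient_le _)
    simpa [MvPolynomial.ringKrullDim_of_isNoetherianRing, ringKrullDim_eq_zero_of_field] using nofun
  have toNat_mono {a b : WithBot ℕ∞} (hab : a ≤ b) (hb : b ≠ ⊤) :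
      (a.unbotD 0).toNat ≤ (b.unbotD 0).toNat := by
    induction a using WithBot.recBotCoe with
    | bot => simp
    | coe a =>
      induction b using WithBot.recBotCoe with
      | bot => simp at hab
      | coe b => exact ENat.toNat_le_toNat (by simpa using hab) (by simpa using hb)
  rcases le_sup_iff.1 (ringKrullDim_quotient_le_sup_of_mul_le hmul) with hA | hB
  · exact le_max_of_le_left (toNat_mono hA (hfin A))
  · exact le_max_of_le_right (toNat_mono hB (hfin B))

theorem stmt16_general (κ κ' s t r n c : ℕ)
    (H : Matrix (Fin κ) (Fin t) (MvPolynomial (Fin c) ℂ))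
    (G : Matrix (Fin s) (Fin κ') (MvPolynomial (Fin c) ℂ))
    (D : Matrix (Fin s) (Fin t) (MvPolynomial (Fin c) ℂ))
    (hcodim : c ≤ adim {x : Fin c → ℂ |
      ((Matrix.fromBlocks 0 H G D).map (MvPolynomial.eval x)).rank ≤ r} + n) :
    c ≤ adim {x : Fin c → ℂ | (G.map (MvPolynomial.eval x)).rank ≤ s - 1} + n ∨
    c ≤ adim {x : Fin c → ℂ | (H.map (MvPolynomial.eval x)).rank ≤ r - s} + n := by
  have hsub : {x : Fin c → ℂ | ((fromBlocks 0 H G D).map (eval x)).rank ≤ r} ⊆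
      {x | (G.map (eval x)).rank ≤ s - 1} ∪ {x | (H.map (eval x)).rank ≤ r - s} := by
    intro x hx
    have := (rank_add_rank_le_rank_fromBlocks_zero (H.map (eval x)) (G.map (eval x))
      (D.map (eval x))).trans (by simpa [fromBlocks_map] using hx)
    simp only [Set.mem_union, Set.mem_ofPred_eq]
    omega
  have := adim_le_max_of_subset_union hsub
  omega

/-- A step in the proof of Proposition 3.5 (case 4): let `E = [[0, H], [G, D]]` be a space
of matrices of linear forms with zero top-left `κ×κ'` block and `G` 1-generic. If
`codim E_r ≤ n` and `κ' ≥ r + 1 > s`, then `codim_G G_{s-1} ≤ n` or `codim_H H_{r-s} ≤ n`. -/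
theorem stmt16 (κ κ' s t r n c : ℕ)
    (H : Matrix (Fin κ) (Fin t) (MvPolynomial (Fin c) ℂ))
    (G : Matrix (Fin s) (Fin κ') (MvPolynomial (Fin c) ℂ))
    (D : Matrix (Fin s) (Fin t) (MvPolynomial (Fin c) ℂ))
    (hlinH : ∀ i j, (H i j).IsHomogeneous 1)
    (hlinG : ∀ i j, (G i j).IsHomogeneous 1)
    (hlinD : ∀ i j, (D i j).IsHomogeneous 1)
    (hGgen : ∀ (u : Fin s → ℂ) (v : Fin κ' → ℂ), u ≠ 0 → v ≠ 0 →
      (∑ i, ∑ j, MvPolynomial.C (u i) * MvPolynomial.C (v j) * G i j) ≠ 0)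
    (hs : s < r + 1) (hκ' : r + 1 ≤ κ')
    (hcodim : c ≤ adim {x : Fin c → ℂ |
      ((Matrix.fromBlocks 0 H G D).map (MvPolynomial.eval x)).rank ≤ r} + n) :
    c ≤ adim {x : Fin c → ℂ | (G.map (MvPolynomial.eval x)).rank ≤ s - 1} + n ∨
    c ≤ adim {x : Fin c → ℂ | (H.map (MvPolynomial.eval x)).rank ≤ r - s} + n :=
  stmt16_general κ κ' s t r n c H G D hcodim
end
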